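/- Assume 0.9·d_{i0} ≤ d_i ≤ 1.1·d_{i0} for every i, 0.9·d_0 ≤ d ≤ 1.1·d_0, ρ ≥ d² + 2‖e‖², 0 < ε ≤ 1/15, the Local RIP holds, and ‖𝒜*(e)‖ ≤ εd_0/(10√2·sκ). Then 𝒩_F̃ ∩ 𝒩_ε ⊆ 𝒩_d ∩ 𝒩_μ ∩ 𝒩_{(9/10)ε}; that is, every (h,x) with F̃(h,x) ≤ ε²d_0²/(3sκ²) + ‖e‖² and δ_i ≤ ε for all i in fact satisfies (h,x) ∈ 𝒩_d ∩ 𝒩_μ and δ_i ≤ (9/10)ε for all i. -/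

import Mathlib

noncomputable section
open Finset ComplexConjugate

namespace RGD

/-- Squared Euclidean norm of a complex vector. -/
def vnormSq {n : ℕ} (v : Fin n → ℂ) : ℝ := ∑ j, ‖v j‖ ^ 2

/-- Euclidean norm of a complex vector. -/
def vnorm {n : ℕ} (v : Fin n → ℂ) : ℝ := Real.sqrt (vnormSq v)

/-- Inner product, conjugate-linear in the first argument. -/
def vinner {n : ℕ} (u v : Fin n → ℂ) : ℂ := ∑ j, conj (u j) * v j

/-- Squared Frobenius norm of a matrix. -/
def frobSq {K N : ℕ} (Z : Matrix (Fin K) (Fin N) ℂ) : ℝ := ∑ k, ∑ j, ‖Z k j‖ ^ 2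

/-- Frobenius norm of a matrix. -/
def frob {K N : ℕ} (Z : Matrix (Fin K) (Fin N) ℂ) : ℝ := Real.sqrt (frobSq Z)

/-- Frobenius inner product `⟨U,V⟩ = Tr(U*V)`, conjugate-linear in the first argument. -/
def finner {K N : ℕ} (U V : Matrix (Fin K) (Fin N) ℂ) : ℂ := ∑ k, ∑ j, conj (U k j) * V k j

/-- Spectral (operator) norm of a matrix: sup of `‖Zv‖` over the closed unit ball. -/
def opNorm {K N : ℕ} (Z : Matrix (Fin K) (Fin N) ℂ) : ℝ :=
  sSup {r : ℝ | ∃ v : Fin N → ℂ, vnorm v ≤ 1 ∧ r = vnorm (Z.mulVec v)}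

/-- Squared Frobenius norm of a block-diagonal matrix, given by its diagonal blocks. -/
def famFrobSq {K N s : ℕ} (Z : Fin s → Matrix (Fin K) (Fin N) ℂ) : ℝ := ∑ i, frobSq (Z i)

/-- Frobenius norm of a block-diagonal matrix, given by its diagonal blocks. -/
def famFrob {K N s : ℕ} (Z : Fin s → Matrix (Fin K) (Fin N) ℂ) : ℝ := Real.sqrt (famFrobSq Z)

/-- The rank-one matrix `u v*`. -/
def rankOne {K N : ℕ} (u : Fin K → ℂ) (v : Fin N → ℂ) : Matrix (Fin K) (Fin N) ℂ :=
  Matrix.of fun k j => u k * conj (v j)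

/-- `ℋ(h,x)`: block-diagonal matrix with `i`-th block `hᵢ xᵢ*`. -/
def Hmap {K N s : ℕ} (h : Fin s → Fin K → ℂ) (x : Fin s → Fin N → ℂ) :
    Fin s → Matrix (Fin K) (Fin N) ℂ := fun i => rankOne (h i) (x i)

/-- `𝒜ᵢ(Z) = (bₗ* Z aₗ)ₗ`. -/
def calAi {K N L : ℕ} (b : Fin L → Fin K → ℂ) (a : Fin L → Fin N → ℂ)
    (Z : Matrix (Fin K) (Fin N) ℂ) : Fin L → ℂ :=
  fun l => vinner (b l) (Z.mulVec (a l))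

/-- `𝒜(Z) = Σᵢ 𝒜ᵢ(Zᵢ)` on block-diagonal matrices. -/
def calA {K N L s : ℕ} (b : Fin L → Fin K → ℂ) (a : Fin s → Fin L → Fin N → ℂ)
    (Z : Fin s → Matrix (Fin K) (Fin N) ℂ) : Fin L → ℂ :=
  fun l => ∑ i, calAi b (a i) (Z i) l

/-- `𝒜ᵢ*(z) = Σₗ zₗ bₗ aₗ*`. -/
def calAdj {K N L : ℕ} (b : Fin L → Fin K → ℂ) (a : Fin L → Fin N → ℂ)
    (z : Fin L → ℂ) : Matrix (Fin K) (Fin N) ℂ :=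
  Matrix.of fun k j => ∑ l, z l * b l k * conj (a l j)

/-- `‖𝒜*(e)‖ = maxᵢ ‖𝒜ᵢ*(e)‖` (operator norms). -/
def AadjNorm {K N L s : ℕ} (b : Fin L → Fin K → ℂ) (a : Fin s → Fin L → Fin N → ℂ)
    (e : Fin L → ℂ) : ℝ :=
  ⨆ i : Fin s, opNorm (calAdj b (a i) e)

/-- `B*B = I_K`, expressed in terms of the columns `bₗ` of `B*`. -/
def BtBeqI {K L : ℕ} (b : Fin L → Fin K → ℂ) : Prop :=
  ∀ k k' : Fin K, (∑ l, b l k * conj (b l k')) = if k = k' then (1 : ℂ) else 0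

/-- `μ ≥ μ_h`, i.e. `√L ‖B h_{i0}‖_∞ ≤ μ ‖h_{i0}‖` for all `i`. -/
def muhLe {K L s : ℕ} (b : Fin L → Fin K → ℂ) (h0 : Fin s → Fin K → ℂ) (μ : ℝ) : Prop :=
  ∀ i l, Real.sqrt L * ‖vinner (b l) (h0 i)‖ ≤ μ * vnorm (h0 i)

/-- `d₀ = √(Σᵢ d_{i0}²)`. -/
def dtot {s : ℕ} (d0 : Fin s → ℝ) : ℝ := Real.sqrt (∑ i, d0 i ^ 2)

/-- Condition number `κ = (maxᵢ d_{i0}) / (minᵢ d_{i0})`. -/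
def kappa {s : ℕ} (d0 : Fin s → ℝ) : ℝ := (⨆ i, d0 i) / (⨅ i, d0 i)

/-- The observation `y = 𝒜(ℋ(h₀,x₀)) + e`. -/
def yvec {K N L s : ℕ} (b : Fin L → Fin K → ℂ) (a : Fin s → Fin L → Fin N → ℂ)
    (h0 : Fin s → Fin K → ℂ) (x0 : Fin s → Fin N → ℂ) (e : Fin L → ℂ) : Fin L → ℂ :=
  fun l => calA b a (Hmap h0 x0) l + e l

/-- `F(h,x) = ‖𝒜(ℋ(h,x)) − y‖²`. -/
def Fobj {K N L s : ℕ} (b : Fin L → Fin K → ℂ) (a : Fin s → Fin L → Fin N → ℂ)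
    (h0 : Fin s → Fin K → ℂ) (x0 : Fin s → Fin N → ℂ) (e : Fin L → ℂ)
    (h : Fin s → Fin K → ℂ) (x : Fin s → Fin N → ℂ) : ℝ :=
  vnormSq (fun l => calA b a (Hmap h x) l - yvec b a h0 x0 e l)

def G0 (z : ℝ) : ℝ := max (z - 1) 0 ^ 2

def G0' (z : ℝ) : ℝ := 2 * max (z - 1) 0

/-- The `i`-th regularizer `Gᵢ(hᵢ,xᵢ)` (including the factor `ρ`). -/
def Gi {K N L : ℕ} (b : Fin L → Fin K → ℂ) (ρ μ di : ℝ)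
    (hi : Fin K → ℂ) (xi : Fin N → ℂ) : ℝ :=
  ρ * (G0 (vnormSq hi / (2 * di)) + G0 (vnormSq xi / (2 * di))
    + ∑ l, G0 ((L : ℝ) * ‖vinner (b l) hi‖ ^ 2 / (8 * di * μ ^ 2)))

/-- The regularizer `G(h,x) = Σᵢ Gᵢ(hᵢ,xᵢ)`. -/
def Greg {K N L s : ℕ} (b : Fin L → Fin K → ℂ) (ρ μ : ℝ) (dd : Fin s → ℝ)
    (h : Fin s → Fin K → ℂ) (x : Fin s → Fin N → ℂ) : ℝ :=
  ∑ i, Gi b ρ μ (dd i) (h i) (x i)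

/-- `F̃ = F + G`. -/
def Ftil {K N L s : ℕ} (b : Fin L → Fin K → ℂ) (a : Fin s → Fin L → Fin N → ℂ)
    (h0 : Fin s → Fin K → ℂ) (x0 : Fin s → Fin N → ℂ) (e : Fin L → ℂ)
    (ρ μ : ℝ) (dd : Fin s → ℝ)
    (h : Fin s → Fin K → ℂ) (x : Fin s → Fin N → ℂ) : ℝ :=
  Fobj b a h0 x0 e h x + Greg b ρ μ dd h x

/-- The residual `𝒜(ℋ(h,x)) − y`. -/
def residual {K N L s : ℕ} (b : Fin L → Fin K → ℂ) (a : Fin s → Fin L → Fin N → ℂ)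
    (h0 : Fin s → Fin K → ℂ) (x0 : Fin s → Fin N → ℂ) (e : Fin L → ℂ)
    (h : Fin s → Fin K → ℂ) (x : Fin s → Fin N → ℂ) : Fin L → ℂ :=
  fun l => calA b a (Hmap h x) l - yvec b a h0 x0 e l

/-- Wirtinger gradient `∇F_{hᵢ} = 𝒜ᵢ*(𝒜(ℋ(h,x)) − y) xᵢ`. -/
def gradFh {K N L s : ℕ} (b : Fin L → Fin K → ℂ) (a : Fin s → Fin L → Fin N → ℂ)
    (h0 : Fin s → Fin K → ℂ) (x0 : Fin s → Fin N → ℂ) (e : Fin L → ℂ)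
    (h : Fin s → Fin K → ℂ) (x : Fin s → Fin N → ℂ) (i : Fin s) : Fin K → ℂ :=
  (calAdj b (a i) (residual b a h0 x0 e h x)).mulVec (x i)

/-- Wirtinger gradient `∇F_{xᵢ} = (𝒜ᵢ*(𝒜(ℋ(h,x)) − y))* hᵢ`. -/
def gradFx {K N L s : ℕ} (b : Fin L → Fin K → ℂ) (a : Fin s → Fin L → Fin N → ℂ)
    (h0 : Fin s → Fin K → ℂ) (x0 : Fin s → Fin N → ℂ) (e : Fin L → ℂ)
    (h : Fin s → Fin K → ℂ) (x : Fin s → Fin N → ℂ) (i : Fin s) : Fin N → ℂ :=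
  (calAdj b (a i) (residual b a h0 x0 e h x)).conjTranspose.mulVec (h i)

/-- Wirtinger gradient `∇G_{hᵢ}`. -/
def gradGh {K L s : ℕ} (b : Fin L → Fin K → ℂ) (ρ μ : ℝ) (dd : Fin s → ℝ)
    (h : Fin s → Fin K → ℂ) (i : Fin s) : Fin K → ℂ :=
  fun k => ((ρ / (2 * dd i) : ℝ) : ℂ) *
    (((G0' (vnormSq (h i) / (2 * dd i)) : ℝ) : ℂ) * h i k
      + (((L : ℝ) / (4 * μ ^ 2) : ℝ) : ℂ) *
        ∑ l, ((G0' ((L : ℝ) * ‖vinner (b l) (h i)‖ ^ 2 / (8 * dd i * μ ^ 2)) : ℝ) : ℂ)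
          * (vinner (b l) (h i) * b l k))

/-- Wirtinger gradient `∇G_{xᵢ}`. -/
def gradGx {N s : ℕ} (ρ : ℝ) (dd : Fin s → ℝ)
    (x : Fin s → Fin N → ℂ) (i : Fin s) : Fin N → ℂ :=
  fun j => ((ρ / (2 * dd i) : ℝ) : ℂ) * (((G0' (vnormSq (x i) / (2 * dd i)) : ℝ) : ℂ) * x i j)

/-- `∇F̃_{hᵢ} = ∇F_{hᵢ} + ∇G_{hᵢ}`. -/
def gradH {K N L s : ℕ} (b : Fin L → Fin K → ℂ) (a : Fin s → Fin L → Fin N → ℂ)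
    (h0 : Fin s → Fin K → ℂ) (x0 : Fin s → Fin N → ℂ) (e : Fin L → ℂ)
    (ρ μ : ℝ) (dd : Fin s → ℝ)
    (h : Fin s → Fin K → ℂ) (x : Fin s → Fin N → ℂ) (i : Fin s) : Fin K → ℂ :=
  fun k => gradFh b a h0 x0 e h x i k + gradGh b ρ μ dd h i k

/-- `∇F̃_{xᵢ} = ∇F_{xᵢ} + ∇G_{xᵢ}`. -/
def gradX {K N L s : ℕ} (b : Fin L → Fin K → ℂ) (a : Fin s → Fin L → Fin N → ℂ)
    (h0 : Fin s → Fin K → ℂ) (x0 : Fin s → Fin N → ℂ) (e : Fin L → ℂ)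
    (ρ μ : ℝ) (dd : Fin s → ℝ)
    (h : Fin s → Fin K → ℂ) (x : Fin s → Fin N → ℂ) (i : Fin s) : Fin N → ℂ :=
  fun j => gradFx b a h0 x0 e h x i j + gradGx ρ dd x i j

/-- `‖∇F̃(h,x)‖²` (squared norm of the stacked Wirtinger gradient). -/
def gradNormSq {K N L s : ℕ} (b : Fin L → Fin K → ℂ) (a : Fin s → Fin L → Fin N → ℂ)
    (h0 : Fin s → Fin K → ℂ) (x0 : Fin s → Fin N → ℂ) (e : Fin L → ℂ)
    (ρ μ : ℝ) (dd : Fin s → ℝ)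
    (h : Fin s → Fin K → ℂ) (x : Fin s → Fin N → ℂ) : ℝ :=
  ∑ i, vnormSq (gradH b a h0 x0 e ρ μ dd h x i) + ∑ i, vnormSq (gradX b a h0 x0 e ρ μ dd h x i)

/-- `‖∇F̃(h',x') − ∇F̃(h,x)‖²`. -/
def gradDiffNormSq {K N L s : ℕ} (b : Fin L → Fin K → ℂ) (a : Fin s → Fin L → Fin N → ℂ)
    (h0 : Fin s → Fin K → ℂ) (x0 : Fin s → Fin N → ℂ) (e : Fin L → ℂ)
    (ρ μ : ℝ) (dd : Fin s → ℝ)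
    (h : Fin s → Fin K → ℂ) (x : Fin s → Fin N → ℂ)
    (h' : Fin s → Fin K → ℂ) (x' : Fin s → Fin N → ℂ) : ℝ :=
  ∑ i, vnormSq (fun k => gradH b a h0 x0 e ρ μ dd h' x' i k - gradH b a h0 x0 e ρ μ dd h x i k)
  + ∑ i, vnormSq (fun j => gradX b a h0 x0 e ρ μ dd h' x' i j - gradX b a h0 x0 e ρ μ dd h x i j)

/-- Membership in `𝒩_d`. -/
def inNd {K N s : ℕ} (d0 : Fin s → ℝ)
    (h : Fin s → Fin K → ℂ) (x : Fin s → Fin N → ℂ) : Prop :=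
  ∀ i, vnorm (h i) ≤ 2 * Real.sqrt (d0 i) ∧ vnorm (x i) ≤ 2 * Real.sqrt (d0 i)

/-- Membership in `𝒩_μ`. -/
def inNmu {K L s : ℕ} (b : Fin L → Fin K → ℂ) (d0 : Fin s → ℝ) (μ : ℝ)
    (h : Fin s → Fin K → ℂ) : Prop :=
  ∀ i, ∀ l, Real.sqrt L * ‖vinner (b l) (h i)‖ ≤ 4 * Real.sqrt (d0 i) * μ

/-- `δᵢ(hᵢ,xᵢ) = ‖hᵢxᵢ* − h_{i0}x_{i0}*‖_F / d_{i0}`. -/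
def deltaI {K N : ℕ} (h0i : Fin K → ℂ) (x0i : Fin N → ℂ) (d0i : ℝ)
    (hi : Fin K → ℂ) (xi : Fin N → ℂ) : ℝ :=
  frob (rankOne hi xi - rankOne h0i x0i) / d0i

/-- Membership in `𝒩_ε`. -/
def inNeps {K N s : ℕ} (h0 : Fin s → Fin K → ℂ) (x0 : Fin s → Fin N → ℂ)
    (d0 : Fin s → ℝ) (ε : ℝ)
    (h : Fin s → Fin K → ℂ) (x : Fin s → Fin N → ℂ) : Prop :=
  ∀ i, deltaI (h0 i) (x0 i) (d0 i) (h i) (x i) ≤ ε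

/-- The global relative error `δ(h,x) = ‖ℋ(h,x) − X₀‖_F / d₀`. -/
def deltaTot {K N s : ℕ} (h0 : Fin s → Fin K → ℂ) (x0 : Fin s → Fin N → ℂ)
    (d0 : Fin s → ℝ)
    (h : Fin s → Fin K → ℂ) (x : Fin s → Fin N → ℂ) : ℝ :=
  famFrob (fun i => Hmap h x i - Hmap h0 x0 i) / dtot d0

/-- Membership in `𝒩_F̃`. -/
def inNF {K N L s : ℕ} (b : Fin L → Fin K → ℂ) (a : Fin s → Fin L → Fin N → ℂ)
    (h0 : Fin s → Fin K → ℂ) (x0 : Fin s → Fin N → ℂ) (e : Fin L → ℂ)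
    (d0 : Fin s → ℝ) (ρ μ : ℝ) (dd : Fin s → ℝ) (ε : ℝ)
    (h : Fin s → Fin K → ℂ) (x : Fin s → Fin N → ℂ) : Prop :=
  Ftil b a h0 x0 e ρ μ dd h x ≤ ε ^ 2 * dtot d0 ^ 2 / (3 * (s : ℝ) * kappa d0 ^ 2) + vnormSq e

/-- The Local Restricted Isometry Property on `𝒩_d ∩ 𝒩_μ ∩ 𝒩_ε`. -/
def LocalRIP {K N L s : ℕ} (b : Fin L → Fin K → ℂ) (a : Fin s → Fin L → Fin N → ℂ)
    (h0 : Fin s → Fin K → ℂ) (x0 : Fin s → Fin N → ℂ)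
    (d0 : Fin s → ℝ) (μ ε : ℝ) : Prop :=
  ∀ (h : Fin s → Fin K → ℂ) (x : Fin s → Fin N → ℂ),
    inNd d0 h x → inNmu b d0 μ h → inNeps h0 x0 d0 ε h x →
      (2 / 3) * famFrobSq (fun i => Hmap h x i - Hmap h0 x0 i)
          ≤ vnormSq (calA b a fun i => Hmap h x i - Hmap h0 x0 i)
      ∧ vnormSq (calA b a fun i => Hmap h x i - Hmap h0 x0 i)
          ≤ (3 / 2) * famFrobSq (fun i => Hmap h x i - Hmap h0 x0 i)

/-- `α_{i1} = ⟨h_{i0}, hᵢ⟩ / d_{i0}`. -/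
def alpha1 {K s : ℕ} (h0 : Fin s → Fin K → ℂ) (d0 : Fin s → ℝ)
    (h : Fin s → Fin K → ℂ) (i : Fin s) : ℂ :=
  vinner (h0 i) (h i) / ((d0 i : ℝ) : ℂ)

/-- `α_{i2} = ⟨x_{i0}, xᵢ⟩ / d_{i0}`. -/
def alpha2 {N s : ℕ} (x0 : Fin s → Fin N → ℂ) (d0 : Fin s → ℝ)
    (x : Fin s → Fin N → ℂ) (i : Fin s) : ℂ :=
  vinner (x0 i) (x i) / ((d0 i : ℝ) : ℂ)

/-- `δ₀ = δ/10`. -/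
def delta0 {K N s : ℕ} (h0 : Fin s → Fin K → ℂ) (x0 : Fin s → Fin N → ℂ)
    (d0 : Fin s → ℝ) (h : Fin s → Fin K → ℂ) (x : Fin s → Fin N → ℂ) : ℝ :=
  deltaTot h0 x0 d0 h x / 10

/-- `αᵢ = (1−δ₀)α_{i1}` if `‖hᵢ‖ ≥ ‖xᵢ‖`, else `1/((1−δ₀) conj(α_{i2}))`. -/
def alphaC {K N s : ℕ} (h0 : Fin s → Fin K → ℂ) (x0 : Fin s → Fin N → ℂ)
    (d0 : Fin s → ℝ) (h : Fin s → Fin K → ℂ) (x : Fin s → Fin N → ℂ) (i : Fin s) : ℂ :=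
  if vnorm (x i) ≤ vnorm (h i)
  then ((1 - delta0 h0 x0 d0 h x : ℝ) : ℂ) * alpha1 h0 d0 h i
  else 1 / (((1 - delta0 h0 x0 d0 h x : ℝ) : ℂ) * conj (alpha2 x0 d0 x i))

/-- `Δhᵢ = hᵢ − αᵢ h_{i0}`. -/
def dh {K N s : ℕ} (h0 : Fin s → Fin K → ℂ) (x0 : Fin s → Fin N → ℂ)
    (d0 : Fin s → ℝ) (h : Fin s → Fin K → ℂ) (x : Fin s → Fin N → ℂ) (i : Fin s) :
    Fin K → ℂ :=
  fun k => h i k - alphaC h0 x0 d0 h x i * h0 i k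

/-- `Δxᵢ = xᵢ − conj(αᵢ)⁻¹ x_{i0}`. -/
def dx {K N s : ℕ} (h0 : Fin s → Fin K → ℂ) (x0 : Fin s → Fin N → ℂ)
    (d0 : Fin s → ℝ) (h : Fin s → Fin K → ℂ) (x : Fin s → Fin N → ℂ) (i : Fin s) :
    Fin N → ℂ :=
  fun j => x i j - (conj (alphaC h0 x0 d0 h x i))⁻¹ * x0 i j

/-- `σ²_max(h,x) = maxₗ Σᵢ |bₗ*hᵢ|² ‖xᵢ‖²`. -/
def sigmaMaxSq {K N L s : ℕ} (b : Fin L → Fin K → ℂ)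
    (h : Fin s → Fin K → ℂ) (x : Fin s → Fin N → ℂ) : ℝ :=
  ⨆ l : Fin L, ∑ i, ‖vinner (b l) (h i)‖ ^ 2 * vnormSq (x i)

/-- The rank-one bound (Lemma: `𝒜` on block-diagonal matrices with rank-1 blocks). -/
def RankOneBound {K N L s : ℕ} (b : Fin L → Fin K → ℂ)
    (a : Fin s → Fin L → Fin N → ℂ) : Prop :=
  ∀ (h : Fin s → Fin K → ℂ) (x : Fin s → Fin N → ℂ),
    vnormSq (calA b a (Hmap h x)) ≤
      4 / 3 * famFrobSq (Hmap h x)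
      + 2 * Real.sqrt (2 * (s : ℝ) * famFrobSq (Hmap h x) * sigmaMaxSq b h x
          * ((K : ℝ) + N) * Real.log L)
      + 8 * (s : ℝ) * sigmaMaxSq b h x * ((K : ℝ) + N) * Real.log L

/-- The subspace `Tᵢ = {h_{i0} v* + u x_{i0}*}`. -/
def Tspace {K N : ℕ} (h0i : Fin K → ℂ) (x0i : Fin N → ℂ) :
    Set (Matrix (Fin K) (Fin N) ℂ) :=
  {Z | ∃ (u : Fin K → ℂ) (v : Fin N → ℂ), Z = rankOne h0i v + rankOne u x0i}

/-- `P` is the orthogonal projection onto `Tᵢ` w.r.t. the Frobenius inner product. -/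
def IsFrobProj {K N : ℕ} (h0i : Fin K → ℂ) (x0i : Fin N → ℂ)
    (P : Matrix (Fin K) (Fin N) ℂ → Matrix (Fin K) (Fin N) ℂ) : Prop :=
  ∀ Z, P Z ∈ Tspace h0i x0i ∧ ∀ W ∈ Tspace h0i x0i, finner W (Z - P Z) = 0

/-- Operator norm of `𝒜ᵢ` from `(ℂ^{K×N}, ‖·‖_F)` to `(ℂ^L, ‖·‖)`. -/
def calAiOpNorm {K N L : ℕ} (b : Fin L → Fin K → ℂ) (a : Fin L → Fin N → ℂ) : ℝ :=
  sSup {r : ℝ | ∃ Z : Matrix (Fin K) (Fin N) ℂ, frob Z ≤ 1 ∧ r = vnorm (calAi b a Z)}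

/-- Operator norm of `𝒜` from block-diagonal matrices with `‖·‖_F` to `ℂ^L`. -/
def calAOpNorm {K N L s : ℕ} (b : Fin L → Fin K → ℂ)
    (a : Fin s → Fin L → Fin N → ℂ) : ℝ :=
  sSup {r : ℝ | ∃ Z : Fin s → Matrix (Fin K) (Fin N) ℂ, famFrob Z ≤ 1 ∧ r = vnorm (calA b a Z)}

/-- Norm of a stacked vector in `ℂ^{ns}`. -/
def stackNorm {n s : ℕ} (u : Fin s → Fin n → ℂ) : ℝ := Real.sqrt (∑ i, vnormSq (u i))

/-- Norm of a point `z = (h,x) ∈ ℂ^{s(K+N)}`. -/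
def pairNorm {K N s : ℕ} (u : Fin s → Fin K → ℂ) (v : Fin s → Fin N → ℂ) : ℝ :=
  Real.sqrt (∑ i, vnormSq (u i) + ∑ i, vnormSq (v i))

/-- `z + t • w` componentwise, `t` real. -/
def shiftV {n s : ℕ} (u w : Fin s → Fin n → ℂ) (t : ℝ) : Fin s → Fin n → ℂ :=
  fun i k => u i k + (t : ℂ) * w i k

/-- `σ_max(h) = maxₗ √(Σᵢ |bₗ*hᵢ|²)` (unit `xᵢ`'s). -/
def sigmaMaxU {K L s : ℕ} (b : Fin L → Fin K → ℂ) (h : Fin s → Fin K → ℂ) : ℝ :=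
  ⨆ l, Real.sqrt (∑ i, ‖vinner (b l) (h i)‖ ^ 2)


/-!
Since `F ≥ 0`, the regularizer alone is at most `d₀²/675 + ‖e‖²`, while `ρ ≥ d² + 2‖e‖²` makes
any argument of `G₀` of size at least `20/11` cost more than that; this gives `𝒩_d` and `𝒩_μ`.
The local RIP then applies to `Δ = ℋ(h,x) − X₀`, and expanding `F = ‖𝒜(Δ) − e‖²` yields
`(2/3)‖Δ‖_F² ≤ ε²d₀²/(3sκ²) + 2|⟨e, 𝒜(Δ)⟩|`. Every block `Δᵢ` has rank at most two, so
`|⟨𝒜ᵢ*(e), Δᵢ⟩| ≤ √2 ‖𝒜*(e)‖ ‖Δᵢ‖_F`, and the resulting quadratic inequality in `‖Δ‖_F` gives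
`‖Δ‖_F ≤ (9/10) ε d₀ / (√s κ) ≤ (9/10) ε d_{i0}`.
-/

open WithLp
open scoped Matrix.Norms.L2Operator

lemma vnorm_eq_norm {n : ℕ} (v : Fin n → ℂ) : vnorm v = ‖toLp 2 v‖ := by
  rw [EuclideanSpace.norm_eq]; rfl

lemma vnormSq_eq_norm_sq {n : ℕ} (v : Fin n → ℂ) : vnormSq v = ‖toLp 2 v‖ ^ 2 := by
  rw [EuclideanSpace.norm_sq_eq]; rfl

lemma vinner_eq_inner {n : ℕ} (u v : Fin n → ℂ) : vinner u v = inner ℂ (toLp 2 u) (toLp 2 v) := by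
  simp [vinner, PiLp.inner_apply, mul_comm]

lemma vnormSq_nonneg {n : ℕ} (v : Fin n → ℂ) : 0 ≤ vnormSq v :=
  Finset.sum_nonneg fun _ _ => sq_nonneg _

lemma vnorm_sq {n : ℕ} (v : Fin n → ℂ) : vnorm v ^ 2 = vnormSq v :=
  Real.sq_sqrt (vnormSq_nonneg v)

lemma vinner_self {n : ℕ} (v : Fin n → ℂ) : vinner v v = vnormSq v := by
  rw [vinner_eq_inner, inner_self_eq_norm_sq_to_K, vnormSq_eq_norm_sq]
  norm_cast

lemma opNorm_eq_l2_opNorm {K N : ℕ} (M : Matrix (Fin K) (Fin N) ℂ) : opNorm M = ‖M‖ := by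
  rw [Matrix.l2_opNorm_def, ← ContinuousLinearMap.sSup_unitClosedBall_eq_norm, opNorm]
  congr 1
  ext r
  simp only [Set.mem_ofPred_eq, Set.mem_image, Metric.mem_closedBall, dist_zero_right]
  constructor
  · rintro ⟨v, hv, rfl⟩
    exact ⟨toLp 2 v, by rwa [← vnorm_eq_norm], by rw [vnorm_eq_norm]; rfl⟩
  · rintro ⟨v, hv, rfl⟩
    exact ⟨ofLp v, by rwa [vnorm_eq_norm], by rw [vnorm_eq_norm]; rfl⟩

lemma opNorm_nonneg {K N : ℕ} (M : Matrix (Fin K) (Fin N) ℂ) : 0 ≤ opNorm M := by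
  rw [opNorm_eq_l2_opNorm]; exact norm_nonneg M

lemma vnorm_mulVec_le {K N : ℕ} (M : Matrix (Fin K) (Fin N) ℂ) (v : Fin N → ℂ) :
    vnorm (M.mulVec v) ≤ opNorm M * vnorm v := by
  rw [opNorm_eq_l2_opNorm, vnorm_eq_norm, vnorm_eq_norm]
  exact M.l2_opNorm_mulVec (toLp 2 v)

lemma norm_vinner_le {n : ℕ} (u v : Fin n → ℂ) : ‖vinner u v‖ ≤ vnorm u * vnorm v := by
  rw [vinner_eq_inner, vnorm_eq_norm, vnorm_eq_norm]; exact norm_inner_le_norm _ _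

lemma vnormSq_sub {n : ℕ} (u v : Fin n → ℂ) :
    vnormSq (u - v) = vnormSq u - 2 * (vinner u v).re + vnormSq v := by
  simp only [vnormSq_eq_norm_sq, vinner_eq_inner, WithLp.toLp_sub, norm_sub_sq (𝕜 := ℂ)]
  rfl

lemma frobSq_nonneg {K N : ℕ} (Z : Matrix (Fin K) (Fin N) ℂ) : 0 ≤ frobSq Z :=
  Finset.sum_nonneg fun _ _ => Finset.sum_nonneg fun _ _ => sq_nonneg _

lemma frob_sq {K N : ℕ} (Z : Matrix (Fin K) (Fin N) ℂ) : frob Z ^ 2 = frobSq Z :=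
  Real.sq_sqrt (frobSq_nonneg Z)

lemma famFrob_sq {K N s : ℕ} (Z : Fin s → Matrix (Fin K) (Fin N) ℂ) :
    famFrob Z ^ 2 = famFrobSq Z :=
  Real.sq_sqrt (Finset.sum_nonneg fun i _ => frobSq_nonneg (Z i))

lemma frob_le_famFrob {K N s : ℕ} (Z : Fin s → Matrix (Fin K) (Fin N) ℂ) (i : Fin s) :
    frob (Z i) ≤ famFrob Z :=
  Real.sqrt_le_sqrt (Finset.single_le_sum (f := fun j => frobSq (Z j))
    (fun j _ => frobSq_nonneg (Z j)) (Finset.mem_univ i))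

lemma sum_frob_le_sqrt_card_mul_famFrob {K N s : ℕ} (Z : Fin s → Matrix (Fin K) (Fin N) ℂ) :
    ∑ i, frob (Z i) ≤ √s * famFrob Z := by
  have hcs := sq_sum_le_card_mul_sum_sq (s := Finset.univ) (f := fun i => frob (Z i))
  simp only [frob_sq, Finset.card_univ, Fintype.card_fin] at hcs
  rw [famFrob, famFrobSq, ← Real.sqrt_mul (Nat.cast_nonneg s)]
  exact Real.le_sqrt_of_sq_le hcs

lemma frobSq_add {K N : ℕ} (Y Z : Matrix (Fin K) (Fin N) ℂ) :
    frobSq (Y + Z) = frobSq Y + frobSq Z + 2 * (finner Y Z).re := by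
  simp only [frobSq, finner, Complex.re_sum, Finset.mul_sum, ← Finset.sum_add_distrib]
  refine Finset.sum_congr rfl fun k _ => Finset.sum_congr rfl fun j _ => ?_
  rw [Matrix.add_apply, Complex.sq_norm, Complex.sq_norm, Complex.sq_norm, Complex.normSq_add,
    ← Complex.conj_re, map_mul, Complex.conj_conj]

lemma frobSq_rankOne {K N : ℕ} (u : Fin K → ℂ) (v : Fin N → ℂ) :
    frobSq (rankOne u v) = vnormSq u * vnormSq v := by
  simp only [frobSq, rankOne, vnormSq, Finset.sum_mul_sum, Matrix.of_apply, norm_mul,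
    Complex.norm_conj, mul_pow]

lemma finner_rankOne_rankOne {K N : ℕ} (p q : Fin K → ℂ) (u w : Fin N → ℂ) :
    finner (rankOne p u) (rankOne q w) = vinner p q * conj (vinner u w) := by
  simp only [finner, rankOne, vinner, Matrix.of_apply, Finset.sum_mul_sum, map_mul,
    Complex.conj_conj, map_sum]
  exact Finset.sum_congr rfl fun k _ => Finset.sum_congr rfl fun j _ => by ring

lemma finner_rankOne {K N : ℕ} (M : Matrix (Fin K) (Fin N) ℂ) (u : Fin K → ℂ) (v : Fin N → ℂ) :
    finner M (rankOne u v) = conj (vinner u (M.mulVec v)) := by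
  simp only [finner, rankOne, Matrix.of_apply, vinner, Matrix.mulVec, dotProduct,
    map_sum, map_mul, Complex.conj_conj, Finset.mul_sum]
  exact Finset.sum_congr rfl fun k _ => Finset.sum_congr rfl fun j _ => by ring

lemma norm_finner_rankOne_le {K N : ℕ} (M : Matrix (Fin K) (Fin N) ℂ) (u : Fin K → ℂ)
    (v : Fin N → ℂ) : ‖finner M (rankOne u v)‖ ≤ opNorm M * (vnorm u * vnorm v) := by
  rw [finner_rankOne, Complex.norm_conj]
  calc ‖vinner u (M.mulVec v)‖ ≤ vnorm u * (opNorm M * vnorm v) :=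
        (norm_vinner_le _ _).trans (mul_le_mul_of_nonneg_left (vnorm_mulVec_le M v)
          (Real.sqrt_nonneg _))
    _ = opNorm M * (vnorm u * vnorm v) := by ring

lemma finner_add_right {K N : ℕ} (M Y Z : Matrix (Fin K) (Fin N) ℂ) :
    finner M (Y + Z) = finner M Y + finner M Z := by
  simp only [finner, Matrix.add_apply, mul_add, Finset.sum_add_distrib]

/-- `w` is the component of `x₀` orthogonal to `x`. -/
lemma exists_rankOne_sub_rankOne_eq {K N : ℕ} (h h₀ : Fin K → ℂ) (x x₀ : Fin N → ℂ) :
    ∃ (p q : Fin K → ℂ) (w : Fin N → ℂ), vinner x w = 0 ∧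
      rankOne h x - rankOne h₀ x₀ = rankOne p x + rankOne q w := by
  set γ : ℂ := vinner x x₀ / (vnormSq x : ℂ)
  refine ⟨fun k => h k - conj γ * h₀ k, fun k => -h₀ k, fun j => x₀ j - γ * x j, ?_, ?_⟩
  · by_cases hx : vnormSq x = 0
    · have : x = 0 := by
        rw [vnormSq_eq_norm_sq, sq_eq_zero_iff, norm_eq_zero] at hx
        simpa using hx
      simp [vinner, this]
    · have hw : toLp 2 (fun j => x₀ j - γ * x j) = toLp 2 x₀ - γ • toLp 2 x := rfl
      rw [vinner_eq_inner, hw, inner_sub_right, inner_smul_right, ← vinner_eq_inner,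
        ← vinner_eq_inner, vinner_self, div_mul_cancel₀ _ (by exact_mod_cast hx), sub_self]
  · ext k j
    simp only [rankOne, Matrix.sub_apply, Matrix.add_apply, Matrix.of_apply, map_sub, map_mul]
    ring

lemma add_le_sqrt_two_mul_sqrt_sq_add_sq (a b : ℝ) : a + b ≤ √2 * √(a ^ 2 + b ^ 2) := by
  rw [← Real.sqrt_mul zero_le_two]
  exact Real.le_sqrt_of_sq_le (by nlinarith [sq_nonneg (a - b)])

lemma frobSq_rankOne_add_rankOne {K N : ℕ} (p q : Fin K → ℂ) (x w : Fin N → ℂ)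
    (horth : vinner x w = 0) :
    frobSq (rankOne p x + rankOne q w) = (vnorm p * vnorm x) ^ 2 + (vnorm q * vnorm w) ^ 2 := by
  simp only [frobSq_add, finner_rankOne_rankOne, horth, map_zero, mul_zero, Complex.zero_re,
    add_zero, frobSq_rankOne, mul_pow, vnorm_sq]

/-- `h x* − h₀ x₀*` has rank at most two, so its nuclear norm is at most `√2` times its
Frobenius norm. -/
lemma norm_finner_rankOne_sub_le {K N : ℕ} (M : Matrix (Fin K) (Fin N) ℂ) (h h₀ : Fin K → ℂ)
    (x x₀ : Fin N → ℂ) :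
    ‖finner M (rankOne h x - rankOne h₀ x₀)‖ ≤
      √2 * opNorm M * frob (rankOne h x - rankOne h₀ x₀) := by
  obtain ⟨p, q, w, horth, hdecomp⟩ := exists_rankOne_sub_rankOne_eq h h₀ x x₀
  rw [hdecomp, frob, frobSq_rankOne_add_rankOne p q x w horth, finner_add_right]
  calc ‖finner M (rankOne p x) + finner M (rankOne q w)‖
      ≤ opNorm M * (vnorm p * vnorm x) + opNorm M * (vnorm q * vnorm w) :=
        (norm_add_le _ _).trans
          (add_le_add (norm_finner_rankOne_le M p x) (norm_finner_rankOne_le M q w))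
    _ ≤ opNorm M * (√2 * √((vnorm p * vnorm x) ^ 2 + (vnorm q * vnorm w) ^ 2)) := by
        rw [← mul_add]
        exact mul_le_mul_of_nonneg_left (add_le_sqrt_two_mul_sqrt_sq_add_sq _ _) (opNorm_nonneg M)
    _ = _ := by ring

section Measurement

variable {K N L s : ℕ} (b : Fin L → Fin K → ℂ) (a : Fin s → Fin L → Fin N → ℂ)

lemma calA_sub (Y Z : Fin s → Matrix (Fin K) (Fin N) ℂ) :
    calA b a (Y - Z) = calA b a Y - calA b a Z := by
  ext l
  simp only [calA, calAi, vinner, Pi.sub_apply, Matrix.sub_mulVec, mul_sub,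
    Finset.sum_sub_distrib]

lemma vinner_calA (e : Fin L → ℂ) (Z : Fin s → Matrix (Fin K) (Fin N) ℂ) :
    vinner e (calA b a Z) = ∑ i, finner (calAdj b (a i) e) (Z i) := by
  simp only [vinner, calA, calAi, finner, calAdj, Matrix.of_apply, Matrix.mulVec, dotProduct,
    map_sum, map_mul, Complex.conj_conj, Finset.mul_sum, Finset.sum_mul]
  rw [Finset.sum_comm]
  refine Finset.sum_congr rfl fun i _ => ?_
  rw [Finset.sum_comm]
  refine Finset.sum_congr rfl fun k _ => ?_
  rw [Finset.sum_comm]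
  exact Finset.sum_congr rfl fun j _ => Finset.sum_congr rfl fun l _ => by ring

lemma opNorm_calAdj_le_AadjNorm (e : Fin L → ℂ) (i : Fin s) :
    opNorm (calAdj b (a i) e) ≤ AadjNorm b a e :=
  le_ciSup (f := fun j => opNorm (calAdj b (a j) e)) (Set.finite_range _).bddAbove i

lemma norm_vinner_calA_sub_le (e : Fin L → ℂ) (h h₀ : Fin s → Fin K → ℂ)
    (x x₀ : Fin s → Fin N → ℂ) :
    ‖vinner e (calA b a (Hmap h x - Hmap h₀ x₀))‖ ≤
      √2 * AadjNorm b a e * (√s * famFrob (Hmap h x - Hmap h₀ x₀)) := by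
  have hAe : 0 ≤ √2 * AadjNorm b a e :=
    mul_nonneg (Real.sqrt_nonneg 2) (Real.iSup_nonneg fun i => opNorm_nonneg _)
  calc ‖vinner e (calA b a (Hmap h x - Hmap h₀ x₀))‖
      ≤ ∑ i, √2 * AadjNorm b a e * frob (Hmap h x i - Hmap h₀ x₀ i) := by
        rw [vinner_calA]
        refine (norm_sum_le _ _).trans (Finset.sum_le_sum fun i _ => ?_)
        refine (norm_finner_rankOne_sub_le _ _ _ _ _).trans ?_
        exact mul_le_mul_of_nonneg_right
          (mul_le_mul_of_nonneg_left (opNorm_calAdj_le_AadjNorm b a e i) (Real.sqrt_nonneg 2))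
          (Real.sqrt_nonneg _)
    _ ≤ _ := by
        rw [← Finset.mul_sum]
        exact mul_le_mul_of_nonneg_left (sum_frob_le_sqrt_card_mul_famFrob _) hAe

end Measurement

lemma G0_nonneg (z : ℝ) : 0 ≤ G0 z := sq_nonneg _

/-- For `dᵢ ≤ 1.1 d_{i0}`, the arguments of `G0` in `Gᵢ` reach `20/11` exactly on the boundaries
`‖hᵢ‖² = 4 d_{i0}`, `‖xᵢ‖² = 4 d_{i0}` and `L|bₗ*hᵢ|² = 16 d_{i0} μ²` of `𝒩_d` and `𝒩_μ`. -/
lemma lt_of_mul_G0_le {ρ d t E z : ℝ} (ht : 0 < t) (hE : 0 ≤ E) (hd : 0.9 * t ≤ d)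
    (hρ : d ^ 2 + 2 * E ≤ ρ) (h : ρ * G0 z ≤ t ^ 2 / 675 + E) : z < 20 / 11 := by
  by_contra! hz
  have hG : (9 / 11 : ℝ) ^ 2 ≤ G0 z :=
    pow_le_pow_left₀ (by norm_num) (le_max_of_le_left (by linarith)) 2
  nlinarith [mul_le_mul_of_nonneg_left hG (le_trans (by positivity) hρ)]

section Regularizer

variable {K N L : ℕ} (b : Fin L → Fin K → ℂ) {ρ : ℝ} (μ di : ℝ) (hi : Fin K → ℂ) (xi : Fin N → ℂ)

lemma mul_G0_h_le_Gi (hρ : 0 ≤ ρ) : ρ * G0 (vnormSq hi / (2 * di)) ≤ Gi b ρ μ di hi xi := by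
  have := G0_nonneg (vnormSq xi / (2 * di))
  have := Finset.sum_nonneg fun l (_ : l ∈ Finset.univ) =>
    G0_nonneg ((L : ℝ) * ‖vinner (b l) hi‖ ^ 2 / (8 * di * μ ^ 2))
  exact mul_le_mul_of_nonneg_left (by linarith) hρ

lemma mul_G0_x_le_Gi (hρ : 0 ≤ ρ) : ρ * G0 (vnormSq xi / (2 * di)) ≤ Gi b ρ μ di hi xi := by
  have := G0_nonneg (vnormSq hi / (2 * di))
  have := Finset.sum_nonneg fun l (_ : l ∈ Finset.univ) =>
    G0_nonneg ((L : ℝ) * ‖vinner (b l) hi‖ ^ 2 / (8 * di * μ ^ 2))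
  exact mul_le_mul_of_nonneg_left (by linarith) hρ

lemma mul_G0_b_le_Gi (hρ : 0 ≤ ρ) (l : Fin L) :
    ρ * G0 ((L : ℝ) * ‖vinner (b l) hi‖ ^ 2 / (8 * di * μ ^ 2)) ≤ Gi b ρ μ di hi xi := by
  have := G0_nonneg (vnormSq hi / (2 * di))
  have := G0_nonneg (vnormSq xi / (2 * di))
  have := Finset.single_le_sum
    (f := fun l => G0 ((L : ℝ) * ‖vinner (b l) hi‖ ^ 2 / (8 * di * μ ^ 2)))
    (fun l _ => G0_nonneg _) (Finset.mem_univ l)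
  exact mul_le_mul_of_nonneg_left (by linarith) hρ

lemma Gi_nonneg (hρ : 0 ≤ ρ) : 0 ≤ Gi b ρ μ di hi xi :=
  (mul_nonneg hρ (G0_nonneg _)).trans (mul_G0_h_le_Gi b μ di hi xi hρ)

end Regularizer

lemma Gi_le_Greg {K N L s : ℕ} (b : Fin L → Fin K → ℂ) {ρ : ℝ} (hρ : 0 ≤ ρ) (μ : ℝ)
    (dd : Fin s → ℝ) (h : Fin s → Fin K → ℂ) (x : Fin s → Fin N → ℂ) (i : Fin s) :
    Gi b ρ μ (dd i) (h i) (x i) ≤ Greg b ρ μ dd h x :=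
  Finset.single_le_sum (f := fun j => Gi b ρ μ (dd j) (h j) (x j))
    (fun j _ => Gi_nonneg b μ (dd j) (h j) (x j) hρ) (Finset.mem_univ i)

lemma vnorm_le_of_div_lt {n : ℕ} {v : Fin n → ℂ} {di d0i : ℝ} (hdi : 0 < di)
    (hdi' : di ≤ 1.1 * d0i) (h : vnormSq v / (2 * di) < 20 / 11) :
    vnorm v ≤ 2 * √d0i := by
  rw [div_lt_iff₀ (by positivity)] at h
  rw [vnorm, show 2 * √d0i = √(2 ^ 2 * d0i) by
    rw [Real.sqrt_mul (by norm_num), Real.sqrt_sq (by norm_num)]]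
  exact Real.sqrt_le_sqrt (by linarith)

lemma sqrt_mul_norm_le_of_div_lt {L : ℕ} {c : ℂ} {μ di d0i : ℝ} (hμ : 0 < μ) (hdi : 0 < di)
    (hdi' : di ≤ 1.1 * d0i) (h : (L : ℝ) * ‖c‖ ^ 2 / (8 * di * μ ^ 2) < 20 / 11) :
    √L * ‖c‖ ≤ 4 * √d0i * μ := by
  rw [div_lt_iff₀ (by positivity)] at h
  have hd0i : 0 ≤ d0i := by linarith
  rw [show √L * ‖c‖ = √(L * ‖c‖ ^ 2) by
      rw [Real.sqrt_mul (Nat.cast_nonneg L), Real.sqrt_sq (norm_nonneg c)],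
    show 4 * √d0i * μ = √((4 * μ) ^ 2 * d0i) by
      rw [Real.sqrt_mul (by positivity), Real.sqrt_sq (by positivity)]; ring]
  exact Real.sqrt_le_sqrt (by nlinarith)

section Scales

variable {s : ℕ} {d0 : Fin s → ℝ}

lemma iSup_le_kappa_mul (hd0 : ∀ i, 0 < d0 i) (i : Fin s) : (⨆ j, d0 j) ≤ kappa d0 * d0 i := by
  have : Nonempty (Fin s) := ⟨i⟩
  obtain ⟨imin, himin⟩ := exists_eq_ciInf_of_finite (f := d0)
  have hinf : 0 < ⨅ j, d0 j := himin ▸ hd0 imin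
  have hsup : 0 ≤ ⨆ j, d0 j := (hd0 i).le.trans (le_ciSup (Set.finite_range d0).bddAbove i)
  rw [kappa, div_mul_eq_mul_div, le_div_iff₀ hinf]
  exact mul_le_mul_of_nonneg_left (ciInf_le (Set.finite_range d0).bddBelow i) hsup

lemma one_le_kappa (hd0 : ∀ i, 0 < d0 i) (i : Fin s) : 1 ≤ kappa d0 :=
  (le_mul_iff_one_le_left (hd0 i)).mp
    ((le_ciSup (Set.finite_range d0).bddAbove i).trans (iSup_le_kappa_mul hd0 i))

lemma dtot_pos (hd0 : ∀ i, 0 < d0 i) (i : Fin s) : 0 < dtot d0 :=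
  Real.sqrt_pos.mpr (Finset.sum_pos (fun j _ => pow_pos (hd0 j) 2) ⟨i, Finset.mem_univ i⟩)

lemma dtot_le_sqrt_mul_kappa_mul (hd0 : ∀ i, 0 < d0 i) (i : Fin s) :
    dtot d0 ≤ √s * (kappa d0 * d0 i) := by
  have hsup : ∀ j, d0 j ≤ ⨆ j, d0 j := le_ciSup (Set.finite_range d0).bddAbove
  calc dtot d0 ≤ √(s * (⨆ j, d0 j) ^ 2) := by
        refine Real.sqrt_le_sqrt ?_
        simpa using Finset.sum_le_sum fun j (_ : j ∈ Finset.univ) =>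
          pow_le_pow_left₀ (hd0 j).le (hsup j) 2
    _ = √s * (⨆ j, d0 j) := by
        rw [Real.sqrt_mul (Nat.cast_nonneg s), Real.sqrt_sq ((hd0 i).le.trans (hsup i))]
    _ ≤ √s * (kappa d0 * d0 i) :=
        mul_le_mul_of_nonneg_left (iSup_le_kappa_mul hd0 i) (Real.sqrt_nonneg _)

end Scales

lemma sq_mul_sq_div_le_sq_div_675 {ε t s κ : ℝ} (hε : 0 < ε) (hε15 : ε ≤ 1 / 15) (hs : 1 ≤ s)
    (hκ : 1 ≤ κ) :
    ε ^ 2 * t ^ 2 / (3 * s * κ ^ 2) ≤ t ^ 2 / 675 := by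
  rw [div_le_div_iff₀ (by positivity) (by norm_num)]
  have : ε ^ 2 ≤ 1 / 225 := by nlinarith
  have : 1 ≤ s * κ ^ 2 := by nlinarith
  nlinarith [sq_nonneg t]

lemma mul_le_nine_tenths_mul_of_sq_le {D c v : ℝ} (hc : 0 < c) (hv : 0 ≤ v)
    (h : 2 / 3 * D ^ 2 ≤ v ^ 2 / (3 * c ^ 2) + v * D / (5 * c)) : D * c ≤ 9 / 10 * v := by
  have hq : 2 * (D * c) ^ 2 ≤ v ^ 2 + 3 / 5 * v * (D * c) := by
    have := mul_le_mul_of_nonneg_left h (by positivity : (0 : ℝ) ≤ 3 * c ^ 2)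
    field_simp at this
    nlinarith
  nlinarith [sq_nonneg (D * c - 9 / 10 * v)]

lemma Greg_nonneg {K N L s : ℕ} (b : Fin L → Fin K → ℂ) {ρ : ℝ} (hρ : 0 ≤ ρ) (μ : ℝ)
    (dd : Fin s → ℝ) (h : Fin s → Fin K → ℂ) (x : Fin s → Fin N → ℂ) :
    0 ≤ Greg b ρ μ dd h x :=
  Finset.sum_nonneg fun i _ => Gi_nonneg b μ (dd i) (h i) (x i) hρ

lemma Fobj_eq {K N L s : ℕ} (b : Fin L → Fin K → ℂ) (a : Fin s → Fin L → Fin N → ℂ)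
    (h0 : Fin s → Fin K → ℂ) (x0 : Fin s → Fin N → ℂ) (e : Fin L → ℂ)
    (h : Fin s → Fin K → ℂ) (x : Fin s → Fin N → ℂ) :
    Fobj b a h0 x0 e h x = vnormSq (calA b a (Hmap h x - Hmap h0 x0) - e) := by
  rw [calA_sub, Fobj]
  congr 1
  ext l
  simp only [yvec, Pi.sub_apply]
  ring

lemma sq_le_of_vnormSq_sub_le {L : ℕ} {y e : Fin L → ℂ} {D β : ℝ}
    (hy : 2 / 3 * D ^ 2 ≤ vnormSq y) (hF : vnormSq (y - e) ≤ β + vnormSq e) :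
    2 / 3 * D ^ 2 ≤ β + 2 * ‖vinner e y‖ := by
  have hre : (vinner y e).re ≤ ‖vinner e y‖ := by
    rw [vinner_eq_inner, vinner_eq_inner, ← inner_conj_symm, Complex.conj_re]
    exact Complex.re_le_norm _
  rw [vnormSq_sub] at hF
  linarith

section Localization

variable {K N L s : ℕ} {b : Fin L → Fin K → ℂ} {a : Fin s → Fin L → Fin N → ℂ}
  {h0 h : Fin s → Fin K → ℂ} {x0 x : Fin s → Fin N → ℂ} {e : Fin L → ℂ}
  {d0 dd : Fin s → ℝ} {μ ρ d ε : ℝ}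

lemma Fobj_le_of_inNF (hρ : 0 ≤ ρ) (hNF : inNF b a h0 x0 e d0 ρ μ dd ε h x) :
    Fobj b a h0 x0 e h x ≤ ε ^ 2 * dtot d0 ^ 2 / (3 * s * kappa d0 ^ 2) + vnormSq e :=
  le_trans (le_add_of_nonneg_right (Greg_nonneg b hρ μ dd h x)) hNF

lemma Greg_le_of_inNF (hNF : inNF b a h0 x0 e d0 ρ μ dd ε h x) :
    Greg b ρ μ dd h x ≤ ε ^ 2 * dtot d0 ^ 2 / (3 * s * kappa d0 ^ 2) + vnormSq e :=
  le_trans (le_add_of_nonneg_left (vnormSq_nonneg _)) hNF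

lemma inNd_inNmu_of_inNF (hd0 : ∀ i, 0 < d0 i)
    (hdd : ∀ i, 0.9 * d0 i ≤ dd i ∧ dd i ≤ 1.1 * d0 i) (hμ : 0 < μ) (hε : 0 < ε)
    (hε15 : ε ≤ 1 / 15) (hd : 0.9 * dtot d0 ≤ d) (hρ : d ^ 2 + 2 * vnormSq e ≤ ρ)
    (hNF : inNF b a h0 x0 e d0 ρ μ dd ε h x) :
    inNd d0 h x ∧ inNmu b d0 μ h := by
  have hρ0 : 0 ≤ ρ :=
    (add_nonneg (sq_nonneg d) (mul_nonneg zero_le_two (vnormSq_nonneg e))).trans hρ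
  have hdd0 : ∀ i, 0 < dd i := fun i => by linarith [hd0 i, (hdd i).1]
  have hG0arg : ∀ i z, ρ * G0 z ≤ Gi b ρ μ (dd i) (h i) (x i) → z < 20 / 11 := by
    intro i z hz
    have hs : (1 : ℝ) ≤ s := by exact_mod_cast i.pos
    have := sq_mul_sq_div_le_sq_div_675 (t := dtot d0) hε hε15 hs (one_le_kappa hd0 i)
    refine lt_of_mul_G0_le (dtot_pos hd0 i) (vnormSq_nonneg e) hd hρ ?_
    linarith [Gi_le_Greg b hρ0 μ dd h x i, Greg_le_of_inNF hNF]
  refine ⟨fun i => ⟨?_, ?_⟩, fun i l => ?_⟩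
  · exact vnorm_le_of_div_lt (hdd0 i) (hdd i).2
      (hG0arg i _ (mul_G0_h_le_Gi b μ (dd i) (h i) (x i) hρ0))
  · exact vnorm_le_of_div_lt (hdd0 i) (hdd i).2
      (hG0arg i _ (mul_G0_x_le_Gi b μ (dd i) (h i) (x i) hρ0))
  · exact sqrt_mul_norm_le_of_div_lt hμ (hdd0 i) (hdd i).2
      (hG0arg i _ (mul_G0_b_le_Gi b μ (dd i) (h i) (x i) hρ0 l))

lemma famFrob_mul_le_of_inNF (hd0 : ∀ i, 0 < d0 i) (hε : 0 < ε) (hρ : 0 ≤ ρ)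
    (hRIP : 2 / 3 * famFrobSq (Hmap h x - Hmap h0 x0) ≤ vnormSq (calA b a (Hmap h x - Hmap h0 x0)))
    (hNF : inNF b a h0 x0 e d0 ρ μ dd ε h x)
    (hAe : AadjNorm b a e ≤ ε * dtot d0 / (10 * √2 * s * kappa d0)) (i : Fin s) :
    famFrob (Hmap h x - Hmap h0 x0) * (√s * kappa d0) ≤ 9 / 10 * (ε * dtot d0) := by
  set D := famFrob (Hmap h x - Hmap h0 x0)
  set t := dtot d0
  set κ := kappa d0
  have hs : (0 : ℝ) < s := by exact_mod_cast i.pos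
  have hs2 : √s ^ 2 = s := Real.sq_sqrt hs.le
  have hD : 0 ≤ D := Real.sqrt_nonneg _
  have hc : 0 < √s * κ := mul_pos (Real.sqrt_pos.mpr hs) (one_pos.trans_le (one_le_kappa hd0 i))
  have hnoise : ‖vinner e (calA b a (Hmap h x - Hmap h0 x0))‖ ≤ ε * t * D / (10 * (√s * κ)) :=
    calc _ ≤ √2 * AadjNorm b a e * (√s * D) := norm_vinner_calA_sub_le b a e h h0 x x0
      _ ≤ √2 * (ε * t / (10 * √2 * s * κ)) * (√s * D) := by gcongr
      _ = ε * t * D / (10 * (√s * κ)) := by field_simp; rw [hs2]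
  have hresidual := sq_le_of_vnormSq_sub_le (famFrob_sq (Hmap h x - Hmap h0 x0) ▸ hRIP)
    (Fobj_eq b a h0 x0 e h x ▸ Fobj_le_of_inNF hρ hNF)
  refine mul_le_nine_tenths_mul_of_sq_le hc (mul_pos hε (dtot_pos hd0 i)).le ?_
  have hβ : ε ^ 2 * t ^ 2 / (3 * s * κ ^ 2) = (ε * t) ^ 2 / (3 * (√s * κ) ^ 2) := by
    rw [mul_pow, mul_pow, hs2]; ring
  have h2 : 2 * (ε * t * D / (10 * (√s * κ))) = ε * t * D / (5 * (√s * κ)) := by ring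
  linarith

lemma deltaI_le_of_inNF (hd0 : ∀ i, 0 < d0 i) (hε : 0 < ε) (hρ : 0 ≤ ρ)
    (hRIP : 2 / 3 * famFrobSq (Hmap h x - Hmap h0 x0) ≤ vnormSq (calA b a (Hmap h x - Hmap h0 x0)))
    (hNF : inNF b a h0 x0 e d0 ρ μ dd ε h x)
    (hAe : AadjNorm b a e ≤ ε * dtot d0 / (10 * √2 * s * kappa d0)) (i : Fin s) :
    deltaI (h0 i) (x0 i) (d0 i) (h i) (x i) ≤ 9 / 10 * ε := by
  have hc : 0 < √s * kappa d0 :=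
    mul_pos (Real.sqrt_pos.mpr (by exact_mod_cast i.pos)) (one_pos.trans_le (one_le_kappa hd0 i))
  have hD := famFrob_mul_le_of_inNF hd0 hε hρ hRIP hNF hAe i
  have ht := dtot_le_sqrt_mul_kappa_mul hd0 i
  rw [deltaI, div_le_iff₀ (hd0 i)]
  refine (frob_le_famFrob (Hmap h x - Hmap h0 x0) i).trans (le_of_mul_le_mul_right ?_ hc)
  calc _ ≤ 9 / 10 * (ε * dtot d0) := hD
    _ ≤ 9 / 10 * (ε * (√s * (kappa d0 * d0 i))) := by gcongr
    _ = 9 / 10 * ε * d0 i * (√s * kappa d0) := by ring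

end Localization

theorem statement1_general
    {K N L s : ℕ}
    (b : Fin L → Fin K → ℂ)
    (a : Fin s → Fin L → Fin N → ℂ)
    (h0 : Fin s → Fin K → ℂ) (x0 : Fin s → Fin N → ℂ)
    (d0 : Fin s → ℝ) (hd0 : ∀ i, 0 < d0 i)
    (e : Fin L → ℂ) (μ ρ d ε : ℝ) (dd : Fin s → ℝ)
    (hμ : 0 < μ) (hε : 0 < ε) (hε15 : ε ≤ 1 / 15)
    (hdd : ∀ i, 0.9 * d0 i ≤ dd i ∧ dd i ≤ 1.1 * d0 i)
    (hdlow : 0.9 * dtot d0 ≤ d)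
    (hρ : d ^ 2 + 2 * vnormSq e ≤ ρ)
    (hRIP : LocalRIP b a h0 x0 d0 μ ε)
    (hAe : AadjNorm b a e ≤ ε * dtot d0 / (10 * Real.sqrt 2 * (s : ℝ) * kappa d0)) :
    ∀ (h : Fin s → Fin K → ℂ) (x : Fin s → Fin N → ℂ),
      inNF b a h0 x0 e d0 ρ μ dd ε h x → inNeps h0 x0 d0 ε h x →
      inNd d0 h x ∧ inNmu b d0 μ h ∧ inNeps h0 x0 d0 (9 / 10 * ε) h x := by
  intro h x hNF hNeps
  obtain ⟨hNd, hNmu⟩ := inNd_inNmu_of_inNF hd0 hdd hμ hε hε15 hdlow hρ hNF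
  have hρ0 : 0 ≤ ρ :=
    (add_nonneg (sq_nonneg d) (mul_nonneg zero_le_two (vnormSq_nonneg e))).trans hρ
  exact ⟨hNd, hNmu, deltaI_le_of_inNF hd0 hε hρ0 (hRIP h x hNd hNmu hNeps).1 hNF hAe⟩

/-- `𝒩_F̃ ∩ 𝒩_ε ⊆ 𝒩_d ∩ 𝒩_μ ∩ 𝒩_{(9/10)ε}`. -/
theorem statement1
    {K N L s : ℕ} (hK : 0 < K) (hN : 0 < N) (hL : 0 < L) (hs : 0 < s)
    (b : Fin L → Fin K → ℂ) (hb : BtBeqI b)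
    (a : Fin s → Fin L → Fin N → ℂ)
    (h0 : Fin s → Fin K → ℂ) (x0 : Fin s → Fin N → ℂ)
    (d0 : Fin s → ℝ) (hd0 : ∀ i, 0 < d0 i)
    (hh0 : ∀ i, vnorm (h0 i) = Real.sqrt (d0 i))
    (hx0 : ∀ i, vnorm (x0 i) = Real.sqrt (d0 i))
    (e : Fin L → ℂ) (μ ρ d ε : ℝ) (dd : Fin s → ℝ)
    (hμ : 0 < μ) (hε : 0 < ε) (hε15 : ε ≤ 1 / 15)
    (hdd : ∀ i, 0.9 * d0 i ≤ dd i ∧ dd i ≤ 1.1 * d0 i)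
    (hdlow : 0.9 * dtot d0 ≤ d) (hdhigh : d ≤ 1.1 * dtot d0)
    (hρ : d ^ 2 + 2 * vnormSq e ≤ ρ)
    (hRIP : LocalRIP b a h0 x0 d0 μ ε)
    (hAe : AadjNorm b a e ≤ ε * dtot d0 / (10 * Real.sqrt 2 * (s : ℝ) * kappa d0)) :
    ∀ (h : Fin s → Fin K → ℂ) (x : Fin s → Fin N → ℂ),
      inNF b a h0 x0 e d0 ρ μ dd ε h x → inNeps h0 x0 d0 ε h x →
      inNd d0 h x ∧ inNmu b d0 μ h ∧ inNeps h0 x0 d0 (9 / 10 * ε) h x :=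
  statement1_general b a h0 x0 d0 hd0 e μ ρ d ε dd hμ hε hε15 hdd hdlow hρ hRIP hAe

end RGD
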